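/- arXiv:1309.3810 — 2 statements merged into one kernel-verified Lean document; each statement's English description precedes it below -/
import Mathlib

section
/- Let c > 0, 0 < η < 1, A > 0 be real numbers and λ₁, λ₂ > 0. Suppose c + ((1+η)/c)·(1/λ₁² + 1/λ₂²) − 2·(1/λ₁ + 1/λ₂) ≤ 2/A and 2/A ≤ η·c·(1−η)/(1+η). Then for i = 1, 2 one has λᵢ ≤ (1+η)/(c·(1 − √(1−η²))). -/
/-!
Put `x = 1/λ₁`, `y = 1/λ₂`. Multiplying the combined hypothesis by `c (1 + η)` and completing
squares turns it into `((1+η) x - c)² + ((1+η) y - c)² ≤ c² (1 - η²)`: the point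
`((1+η) x, (1+η) y)` lies in the disc of radius `c √(1 - η²)` about `(c, c)`. Hence each
coordinate is at least `c (1 - √(1 - η²)) > 0`, which is the claimed upper bound on `λᵢ`.
-/

open Real

lemma sub_sq_add_sub_sq_le_of_le {c η x y : ℝ} (hc : 0 < c) (hη : 0 < 1 + η)
    (h : c + ((1 + η) / c) * (x ^ 2 + y ^ 2) - 2 * (x + y) ≤ η * c * (1 - η) / (1 + η)) :
    ((1 + η) * x - c) ^ 2 + ((1 + η) * y - c) ^ 2 ≤ c ^ 2 * (1 - η ^ 2) := by
  have hscaled := mul_le_mul_of_nonneg_right h (mul_pos hc hη).le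
  have hlhs : (c + ((1 + η) / c) * (x ^ 2 + y ^ 2) - 2 * (x + y)) * (c * (1 + η))
      = c ^ 2 * (1 + η) + (1 + η) ^ 2 * (x ^ 2 + y ^ 2) - 2 * c * (1 + η) * (x + y) := by
    field_simp
  have hrhs : η * c * (1 - η) / (1 + η) * (c * (1 + η)) = η * c ^ 2 * (1 - η) := by
    field_simp
  rw [hlhs, hrhs] at hscaled
  linear_combination hscaled

lemma mul_one_sub_sqrt_le_of_sub_sq_add_sq_le {a b c t : ℝ} (hc : 0 ≤ c)
    (h : (a - c) ^ 2 + b ^ 2 ≤ c ^ 2 * t) : c * (1 - √t) ≤ a := by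
  have hdist : |a - c| ≤ c * √t := by
    rw [show c * √t = √(c ^ 2 * t) by rw [sqrt_mul (sq_nonneg c), sqrt_sq hc]]
    exact abs_le_sqrt (by nlinarith [sq_nonneg b])
  linarith [neg_abs_le (a - c)]

lemma eigenvalue_le_of_le {c η lam other : ℝ} (hc : 0 < c) (hη : 0 < η)
    (hlam : 0 < lam)
    (h : c + ((1 + η) / c) * (1 / lam ^ 2 + 1 / other ^ 2) - 2 * (1 / lam + 1 / other)
      ≤ η * c * (1 - η) / (1 + η)) :
    lam ≤ (1 + η) / (c * (1 - √(1 - η ^ 2))) := by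
  have hdisc := sub_sq_add_sub_sq_le_of_le (η := η) (x := 1 / lam) (y := 1 / other) hc
    (by linarith) (by simpa only [div_pow, one_pow] using h)
  have hlow := mul_one_sub_sqrt_le_of_sub_sq_add_sq_le hc.le hdisc
  have hsqrt : √(1 - η ^ 2) < 1 := by
    rw [sqrt_lt' one_pos]
    nlinarith
  rw [le_div_iff₀ (mul_pos hc (by linarith)), ← le_div_iff₀' hlam]
  simpa only [mul_one_div] using hlow

theorem stmt_10_general (c η A lam₁ lam₂ : ℝ) (hc : 0 < c) (hη0 : 0 < η)
    (hlam₁ : 0 < lam₁) (hlam₂ : 0 < lam₂)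
    (h1 : c + ((1 + η) / c) * (1 / lam₁ ^ 2 + 1 / lam₂ ^ 2) -
        2 * (1 / lam₁ + 1 / lam₂) ≤ 2 / A)
    (h2 : 2 / A ≤ η * c * (1 - η) / (1 + η)) :
    lam₁ ≤ (1 + η) / (c * (1 - Real.sqrt (1 - η ^ 2))) ∧
      lam₂ ≤ (1 + η) / (c * (1 - Real.sqrt (1 - η ^ 2))) := by
  have h := h1.trans h2
  refine ⟨eigenvalue_le_of_le hc hη0 hlam₁ h,
    eigenvalue_le_of_le (other := lam₁) hc hη0 hlam₂ ?_⟩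
  linarith

theorem stmt_10 (c η A lam₁ lam₂ : ℝ) (hc : 0 < c) (hη0 : 0 < η) (hη1 : η < 1)
    (hA : 0 < A) (hlam₁ : 0 < lam₁) (hlam₂ : 0 < lam₂)
    (h1 : c + ((1 + η) / c) * (1 / lam₁ ^ 2 + 1 / lam₂ ^ 2) -
        2 * (1 / lam₁ + 1 / lam₂) ≤ 2 / A)
    (h2 : 2 / A ≤ η * c * (1 - η) / (1 + η)) :
    lam₁ ≤ (1 + η) / (c * (1 - Real.sqrt (1 - η ^ 2))) ∧
      lam₂ ≤ (1 + η) / (c * (1 - Real.sqrt (1 - η ^ 2))) :=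
  stmt_10_general c η A lam₁ lam₂ hc hη0 hlam₁ hlam₂ h1 h2
end

section
/- Let X be a 2×2 Hermitian positive definite complex matrix and let c > 0 and 0 < η < 1 be real numbers. If c + ((1+η)/c)·Re(trace(X⁻¹ * X⁻¹)) − 2·Re(trace X⁻¹) ≤ η·c·(1−η)/(1+η), then ((1+η)/(c·(1 − √(1−η²))))•(1 : Matrix) − X is positive semidefinite. -/
/-!
In terms of the reciprocal eigenvalues `xᵢ = 1/λᵢ` of `X`, the hypothesis multiplied by
`c (1 + η)` becomes, after completing the square, `∑ ((1 + η) xᵢ - c)² ≤ c² (1 - η²)`. Hence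
`(1 + η)/λᵢ ≥ c (1 - √(1 - η²)) > 0` for each `i`, i.e. every eigenvalue of `X` is at most
`(1 + η) / (c (1 - √(1 - η²)))`, which is the claimed Loewner bound.
-/

open scoped ComplexOrder
open Matrix

namespace Matrix.IsHermitian

variable {n 𝕜 : Type*} [Fintype n] [DecidableEq n] [RCLike 𝕜] {A : Matrix n n 𝕜}

lemma trace_cfc (hA : A.IsHermitian) (f : ℝ → ℝ) :
    (cfc f A).trace = ∑ i, (f (hA.eigenvalues i) : 𝕜) := by
  rw [hA.cfc_eq, IsHermitian.cfc, Unitary.conjStarAlgAut_apply, trace_mul_cycle,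
    Unitary.coe_star_mul_self, one_mul, trace_diagonal]
  rfl

lemma re_trace_cfc (hA : A.IsHermitian) (f : ℝ → ℝ) :
    RCLike.re (cfc f A).trace = ∑ i, f (hA.eigenvalues i) := by
  simp [hA.trace_cfc]

lemma inv_eq_cfc (hA : A.IsHermitian) (hA' : IsUnit A) : A⁻¹ = cfc (·⁻¹ : ℝ → ℝ) A := by
  rw [nonsing_inv_eq_ringInverse, cfc_ringInverse_id A hA' hA.isSelfAdjoint]

open scoped MatrixOrder in
lemma posSemidef_smul_one_sub (hA : A.IsHermitian) {r : ℝ} (hr : ∀ i, hA.eigenvalues i ≤ r) :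
    ((r : 𝕜) • (1 : Matrix n n 𝕜) - A).PosSemidef := by
  have hAr : A ≤ algebraMap ℝ (Matrix n n 𝕜) r := by
    rw [le_algebraMap_iff_spectrum_le hA.isSelfAdjoint, hA.spectrum_real_eq_range_eigenvalues]
    rintro _ ⟨i, rfl⟩
    exact hr i
  rwa [Algebra.algebraMap_eq_smul_one, le_iff, RCLike.real_smul_eq_coe_smul (K := 𝕜)] at hAr

end Matrix.IsHermitian

lemma sum_sq_mul_sub_le {c η : ℝ} (hc : 0 < c) (hη : -1 < η) (x : Fin 2 → ℝ)
    (h : c + ((1 + η) / c) * ∑ i, x i ^ 2 - 2 * ∑ i, x i ≤ η * c * (1 - η) / (1 + η)) :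
    ∑ i, ((1 + η) * x i - c) ^ 2 ≤ c ^ 2 * (1 - η ^ 2) := by
  have hη' : 0 < 1 + η := by linarith
  simp only [Fin.sum_univ_two] at h ⊢
  field_simp at h
  linarith

lemma mul_one_sub_sqrt_le {c η : ℝ} (hc : 0 < c) (hη : η ^ 2 ≤ 1) {ι : Type*} [Fintype ι]
    (x : ι → ℝ) (h : ∑ i, ((1 + η) * x i - c) ^ 2 ≤ c ^ 2 * (1 - η ^ 2)) (i : ι) :
    c * (1 - √(1 - η ^ 2)) ≤ (1 + η) * x i := by
  have hi : ((1 + η) * x i - c) ^ 2 ≤ (c * √(1 - η ^ 2)) ^ 2 := by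
    rw [mul_pow, Real.sq_sqrt (by linarith)]
    exact (Finset.single_le_sum (f := fun j => ((1 + η) * x j - c) ^ 2)
      (fun j _ => sq_nonneg _) (Finset.mem_univ i)).trans h
  linarith [(abs_le_of_sq_le_sq' hi (by positivity)).1]

theorem stmt_11 (X : Matrix (Fin 2) (Fin 2) ℂ) (hX : X.PosDef)
    (c η : ℝ) (hc : 0 < c) (hη0 : 0 < η) (hη1 : η < 1)
    (h : c + ((1 + η) / c) * ((X⁻¹ * X⁻¹).trace).re - 2 * (X⁻¹.trace).re ≤
        η * c * (1 - η) / (1 + η)) :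
    ((((1 + η) / (c * (1 - Real.sqrt (1 - η ^ 2))) : ℝ) : ℂ) •
        (1 : Matrix (Fin 2) (Fin 2) ℂ) - X).PosSemidef := by
  have hH := hX.isHermitian
  have hinv := hH.inv_eq_cfc hX.isUnit
  have htr : (X⁻¹.trace).re = ∑ i, (hH.eigenvalues i)⁻¹ := by
    rw [hinv]
    exact hH.re_trace_cfc _
  have htr_sq : ((X⁻¹ * X⁻¹).trace).re = ∑ i, (hH.eigenvalues i)⁻¹ ^ 2 := by
    rw [hinv, ← sq, ← cfc_pow _ 2 X (X.finite_real_spectrum.continuousOn _)]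
    exact hH.re_trace_cfc _
  rw [htr, htr_sq] at h
  have hbound := mul_one_sub_sqrt_le hc (by nlinarith) _ (sum_sq_mul_sub_le hc (by linarith) _ h)
  have hden : 0 < c * (1 - √(1 - η ^ 2)) :=
    mul_pos hc (sub_pos.mpr ((Real.sqrt_lt' one_pos).mpr (by nlinarith)))
  refine hH.posSemidef_smul_one_sub (r := (1 + η) / (c * (1 - √(1 - η ^ 2)))) fun i => ?_
  have hi := hbound i
  rw [← div_eq_mul_inv, le_div_iff₀' (hX.eigenvalues_pos i)] at hi
  rwa [le_div_iff₀ hden]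
end
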